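/- Let $m\ge0$, $n\ge1$ be integers and $a>0$, $b>0$ reals, and set $\mu_0=\dfrac{(1+a)^n a^m b+n I_{m,n-1}(a)}{I_{m,n}(a)}$. Then $\big(\mu_0-(n+m+1)\big)\,I_{m,n}(a) = a^m(1+a)^n\,(b-a)$. In particular, if $\mu_0\le n$ then $b<a$. -/

import Mathlib

/-- `I_{m,n}(x) = ∫₀ˣ tᵐ(1+t)ⁿ dt`. -/
noncomputable def Imn (m n : ℕ) (x : ℝ) : ℝ := ∫ t in (0:ℝ)..x, t ^ m * (1 + t) ^ n

lemma Imn_cont (m n : ℕ) : Continuous (fun t : ℝ => t ^ m * (1 + t) ^ n) := by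
  continuity

lemma Imn_pos (m n : ℕ) {a : ℝ} (ha : 0 < a) : 0 < Imn m n a := by
  apply intervalIntegral.intervalIntegral_pos_of_pos_on
    ((Imn_cont m n).intervalIntegrable 0 a)
  · intro x hx
    have hx0 : 0 < x := hx.1
    positivity
  · exact ha

lemma Imn_key (m k : ℕ) (a : ℝ) :
    a ^ (m + 1) * (1 + a) ^ (k + 1) =
      ((k : ℝ) + m + 2) * Imn m (k + 1) a - ((k : ℝ) + 1) * Imn m k a := by
  have hderiv : ∀ t : ℝ, HasDerivAt (fun t : ℝ => t ^ (m + 1) * (1 + t) ^ (k + 1))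
      (((k : ℝ) + m + 2) * (t ^ m * (1 + t) ^ (k + 1)) - ((k : ℝ) + 1) * (t ^ m * (1 + t) ^ k)) t := by
    intro t
    have h1 : HasDerivAt (fun t : ℝ => (1 + t) ^ (k + 1))
        (((k : ℝ) + 1) * (1 + t) ^ k * 1) t := by
      have := ((hasDerivAt_id t).const_add (1 : ℝ)).pow (k + 1)
      simp at this ⊢
      exact this
    have := (hasDerivAt_pow (m + 1) t).fun_mul h1
    refine this.congr_deriv ?_
    push_cast
    ring
  have hint := intervalIntegral.integral_eq_sub_of_hasDerivAt
    (f := fun t : ℝ => t ^ (m + 1) * (1 + t) ^ (k + 1))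
    (fun x _ => hderiv x)
    (Continuous.intervalIntegrable (by continuity) 0 a)
  rw [intervalIntegral.integral_sub
      ((continuous_const.fun_mul (Imn_cont m (k+1))).intervalIntegrable 0 a)
      ((continuous_const.fun_mul (Imn_cont m k)).intervalIntegrable 0 a),
    intervalIntegral.integral_const_mul, intervalIntegral.integral_const_mul] at hint
  simp only [Imn]
  simp only [zero_pow (Nat.succ_ne_zero m), zero_mul] at hint
  linarith [hint]

/-- Let `m ≥ 0`, `n ≥ 1` be integers, `a, b > 0` reals and
`μ_0 = ((1+a)ⁿ aᵐ b + n I_{m,n-1}(a)) / I_{m,n}(a)`. Then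
`(μ_0 - (n+m+1)) I_{m,n}(a) = aᵐ(1+a)ⁿ(b-a)`; in particular if `μ_0 ≤ n` then `b < a`. -/
theorem stmt_9 (m n : ℕ) (hn : 1 ≤ n) (a b : ℝ) (ha : 0 < a) (hb : 0 < b) :
    let mu0 : ℝ := ((1 + a) ^ n * a ^ m * b + (n : ℝ) * Imn m (n - 1) a) / Imn m n a
    (mu0 - ((n : ℝ) + m + 1)) * Imn m n a = a ^ m * (1 + a) ^ n * (b - a) ∧
    (mu0 ≤ n → b < a) := by
  obtain ⟨k, rfl⟩ : ∃ k, n = k + 1 := ⟨n - 1, (Nat.succ_pred_eq_of_pos hn).symm⟩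
  intro mu0
  have hJ : 0 < Imn m (k + 1) a := Imn_pos m (k + 1) ha
  have hkey := Imn_key m k a
  have hsimp : (k + 1 - 1 : ℕ) = k := rfl
  have hfirst : (mu0 - (((k : ℕ) + 1 : ℕ) + m + 1 : ℝ)) * Imn m (k + 1) a
      = a ^ m * (1 + a) ^ (k + 1) * (b - a) := by
    show (((1 + a) ^ (k + 1) * a ^ m * b + ((k + 1 : ℕ) : ℝ) * Imn m (k + 1 - 1) a) /
        Imn m (k + 1) a - _) * Imn m (k + 1) a = _
    rw [hsimp]
    field_simp
    push_cast
    rw [pow_succ] at hkey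
    linear_combination hkey
  constructor
  · push_cast at hfirst ⊢
    convert hfirst using 2
  · intro hmu
    have hpow : 0 < a ^ m * (1 + a) ^ (k + 1) := by positivity
    have hle : mu0 - (((k : ℝ) + 1) + m + 1) ≤ -((m : ℝ) + 1) := by
      push_cast at hmu ⊢
      linarith
    have hneg : (mu0 - (((k : ℝ) + 1) + m + 1)) * Imn m (k + 1) a < 0 := by
      have hm : (0:ℝ) ≤ m := Nat.cast_nonneg m
      have : -((m : ℝ) + 1) < 0 := by linarith
      nlinarith
    push_cast at hfirst
    nlinarith [hfirst, hneg, hpow]
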